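/- For the induction motor model with drift a(x) = ω e_θ + (μψ_d I_q − τ_L/J) e_ω + (−ηψ_d + ηM I_d) e_{ψ_d} + (n_pω + ηM I_q/ψ_d) e_ρ, one has [e_ω, a](x) = e_θ + n_p e_ρ at every point with ψ_d ≠ 0, and consequently the six vectors e_{I_d}, e_{I_q}, e_{ψ_d}, e_ω, e_ρ, [e_ω, a](x) span ℝ⁶ at every such point; i.e., G₁ = D̄₂ + [a, D̄₂] equals the whole tangent space. -/

import Mathlib

/-- The i-th standard basis vector of ℝ⁶; coordinates are ordered
`(θ, ω, ψ_d, ρ, I_d, I_q)`. -/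
noncomputable def e (i : Fin 6) : Fin 6 → ℝ := Pi.single i 1

/-- Drift of the induction motor model:
`a(x) = ω e_θ + (μψ_d I_q − τ_L/J) e_ω + (−ηψ_d + ηM I_d) e_{ψ_d} + (n_pω + ηM I_q/ψ_d) e_ρ`. -/
noncomputable def motorDrift (μ η M np τL J : ℝ) : (Fin 6 → ℝ) → (Fin 6 → ℝ) :=
  fun x => x 1 • e 0 + (μ * x 2 * x 5 - τL / J) • e 1 +
    (-(η * x 2) + η * M * x 4) • e 2 + (np * x 1 + η * M * x 5 / x 2) • e 3

/-! Since `e_ω` is a constant field, `[e_ω, a](x) = Da(x) e_ω` is the derivative of `a` along the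
`ω`-line through `x`. On that line `a` is affine in `ω` with slope `e_θ + n_p e_ρ` (the only
nonlinearity, `1/ψ_d`, is constant there), while `ψ_d ≠ 0` makes `a` differentiable, so the Fréchet
derivative agrees with this slope. The six vectors then differ from the standard basis by a shear. -/

open VectorField

section LineDeriv

variable {𝕜 E F : Type*} [NontriviallyNormedField 𝕜] [NormedAddCommGroup E] [NormedSpace 𝕜 E]
  [NormedAddCommGroup F] [NormedSpace 𝕜 F]

theorem lieBracket_const_left (v : E) (W : E → E) (x : E) :
    lieBracket 𝕜 (fun _ => v) W x = fderiv 𝕜 W x v := by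
  simp [lieBracket]

theorem hasLineDerivAt_of_forall_add_smul_eq {f : E → F} {x v : E} {w : F}
    (h : ∀ t : 𝕜, f (x + t • v) = f x + t • w) : HasLineDerivAt 𝕜 f w x v := by
  unfold HasLineDerivAt
  simp_rw [h]
  simpa using ((hasDerivAt_id (0 : 𝕜)).smul_const w).const_add (f x)

theorem DifferentiableAt.fderiv_apply_of_forall_add_smul_eq {f : E → F} {x v : E} {w : F}
    (hf : DifferentiableAt 𝕜 f x) (h : ∀ t : 𝕜, f (x + t • v) = f x + t • w) :
    fderiv 𝕜 f x v = w :=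
  (hf.hasFDerivAt.hasLineDerivAt v).unique (hasLineDerivAt_of_forall_add_smul_eq h)

end LineDeriv

theorem motorDrift_add_smul_e_one (μ η M np τL J : ℝ) (x : Fin 6 → ℝ) (t : ℝ) :
    motorDrift μ η M np τL J (x + t • e 1) =
      motorDrift μ η M np τL J x + t • (e 0 + np • e 3) := by
  ext i
  fin_cases i <;> simp [motorDrift, e]
  ring

theorem differentiableAt_motorDrift (μ η M np τL J : ℝ) {x : Fin 6 → ℝ} (hψ : x 2 ≠ 0) :
    DifferentiableAt ℝ (motorDrift μ η M np τL J) x := by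
  unfold motorDrift
  fun_prop (disch := exact hψ)

theorem lieBracket_e_one_motorDrift (μ η M np τL J : ℝ) {x : Fin 6 → ℝ} (hψ : x 2 ≠ 0) :
    lieBracket ℝ (fun _ => e 1) (motorDrift μ η M np τL J) x = e 0 + np • e 3 := by
  rw [lieBracket_const_left]
  exact (differentiableAt_motorDrift μ η M np τL J hψ).fderiv_apply_of_forall_add_smul_eq
    (motorDrift_add_smul_e_one μ η M np τL J x)

theorem span_e_eq_top : Submodule.span ℝ (Set.range e) = ⊤ := by
  convert (Pi.basisFun ℝ (Fin 6)).span_eq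
  ext; simp [e]

theorem span_e_with_e_zero_add_smul_eq_top (c : ℝ) :
    Submodule.span ℝ ({e 4, e 5, e 2, e 1, e 3, e 0 + c • e 3} : Set (Fin 6 → ℝ)) = ⊤ := by
  set S := Submodule.span ℝ ({e 4, e 5, e 2, e 1, e 3, e 0 + c • e 3} : Set (Fin 6 → ℝ))
  have he0 : e 0 ∈ S := by
    simpa using S.sub_mem (Submodule.subset_span (by simp) : e 0 + c • e 3 ∈ S)
      (S.smul_mem c (Submodule.subset_span (by simp) : e 3 ∈ S))
  rw [eq_top_iff, ← span_e_eq_top, Submodule.span_le]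
  rintro _ ⟨i, rfl⟩
  fin_cases i
  · exact he0
  all_goals exact Submodule.subset_span (by simp)

theorem stmt10_general (μ η M np τL J : ℝ) (x : Fin 6 → ℝ) (hψ : x 2 ≠ 0) :
    VectorField.lieBracket ℝ (fun _ => e 1) (motorDrift μ η M np τL J) x = e 0 + np • e 3 ∧
    Submodule.span ℝ ({e 4, e 5, e 2, e 1, e 3,
      VectorField.lieBracket ℝ (fun _ => e 1) (motorDrift μ η M np τL J) x} :
        Set (Fin 6 → ℝ)) = ⊤ := by
  have hbracket := lieBracket_e_one_motorDrift μ η M np τL J hψ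
  exact ⟨hbracket, hbracket ▸ span_e_with_e_zero_add_smul_eq_top np⟩

/-- For the induction motor, `[e_ω, a](x) = e_θ + n_p e_ρ` at every point with `ψ_d ≠ 0`, and
consequently `e_{I_d}, e_{I_q}, e_{ψ_d}, e_ω, e_ρ, [e_ω, a](x)` span ℝ⁶ at every such point;
i.e. `G₁ = D̄₂ + [a, D̄₂]` equals the whole tangent space. -/
theorem stmt10 (μ η M np τL J : ℝ) (hJ : J ≠ 0) (x : Fin 6 → ℝ) (hψ : x 2 ≠ 0) :
    VectorField.lieBracket ℝ (fun _ => e 1) (motorDrift μ η M np τL J) x = e 0 + np • e 3 ∧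
    Submodule.span ℝ ({e 4, e 5, e 2, e 1, e 3,
      VectorField.lieBracket ℝ (fun _ => e 1) (motorDrift μ η M np τL J) x} :
        Set (Fin 6 → ℝ)) = ⊤ :=
  stmt10_general μ η M np τL J x hψ
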